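/- For all real α, φ₁, φ₂: 1 - cos(φ_{1α} - φ_{2α}) = (1 - cos(φ₁ - φ₂)) / (ω_α(φ₁) ω_α(φ₂)), where ω_α(φ) = cosh α - sinh α cos φ and φ_α is defined by sin φ_α = sin φ/ω_α(φ), cos φ_α = (-sinh α + cosh α cos φ)/ω_α(φ). -/

import Mathlib

/-!
The map φ ↦ φ_α is the action of the Lorentz boost of rapidity α on the unit circle, viewed as
the projectivised light cone: the boost sends (1, cos φ, sin φ) to ω_α(φ) (1, cos φ_α, sin φ_α).
Since 1 - cos(φ₁ - φ₂) is the Minkowski product of (1, cos φ₁, sin φ₁) and (1, cos φ₂, sin φ₂),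
which the boost preserves, dividing out the two scale factors ω_α(φ₁), ω_α(φ₂) gives the identity.
-/

open Real

lemma Real.abs_sinh_lt_cosh (x : ℝ) : |sinh x| < cosh x :=
  abs_lt.2 ⟨neg_lt.1 (by simpa using sinh_lt_cosh (-x)), sinh_lt_cosh x⟩

lemma Real.cosh_sub_sinh_mul_pos (α : ℝ) {t : ℝ} (ht : |t| ≤ 1) : 0 < cosh α - sinh α * t := by
  have : |sinh α * t| < cosh α :=
    calc |sinh α * t| = |sinh α| * |t| := abs_mul _ _
      _ ≤ |sinh α| := mul_le_of_le_one_right (abs_nonneg _) ht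
      _ < cosh α := abs_sinh_lt_cosh α
  linarith [(abs_lt.1 this).2]

lemma one_sub_inner_boost {c s x₁ y₁ x₂ y₂ : ℝ} (hcs : c ^ 2 - s ^ 2 = 1)
    (hω₁ : c - s * x₁ ≠ 0) (hω₂ : c - s * x₂ ≠ 0) :
    1 - ((-s + c * x₁) / (c - s * x₁) * ((-s + c * x₂) / (c - s * x₂)) +
        y₁ / (c - s * x₁) * (y₂ / (c - s * x₂))) =
      (1 - (x₁ * x₂ + y₁ * y₂)) / ((c - s * x₁) * (c - s * x₂)) := by
  field_simp
  linear_combination (1 - x₁ * x₂) * hcs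

theorem stmt15 (α : ℝ) (Φ : ℝ → ℝ)
    (hsin : ∀ φ, Real.sin (Φ φ) =
      Real.sin φ / (Real.cosh α - Real.sinh α * Real.cos φ))
    (hcos : ∀ φ, Real.cos (Φ φ) =
      (-Real.sinh α + Real.cosh α * Real.cos φ) /
        (Real.cosh α - Real.sinh α * Real.cos φ))
    (φ₁ φ₂ : ℝ) :
    1 - Real.cos (Φ φ₁ - Φ φ₂) =
      (1 - Real.cos (φ₁ - φ₂)) /
        ((Real.cosh α - Real.sinh α * Real.cos φ₁) *
          (Real.cosh α - Real.sinh α * Real.cos φ₂)) := by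
  rw [cos_sub, cos_sub, hsin, hsin, hcos, hcos]
  exact one_sub_inner_boost (cosh_sq_sub_sinh_sq α)
    (cosh_sub_sinh_mul_pos α (abs_cos_le_one φ₁)).ne'
    (cosh_sub_sinh_mul_pos α (abs_cos_le_one φ₂)).ne'
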